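/- Let T ∈ ℂ[X]_d with T = Σ_{i=1}^r ω_i (ξ_i·X)^d, ω_i ∈ ℂ nonzero, ξ_i ∈ ℂ^m, and suppose rank H_T^{k,d−k} = r for some 0 ≤ k ≤ d. Then the column space of H_T^{k,d−k} equals the span of the vectors conj(ξ_1)^{(k)},…,conj(ξ_r)^{(k)}; consequently, a polynomial p = Σ_{|α|=k} p_α X^α ∈ ℂ[X]_k has coefficient vector (p_α) in the left kernel of H_T^{k,d−k} (i.e. orthogonal, under the bilinear pairing (p_α)·w = Σ_α p_α w_α, to the column space) if and only if p(conj(ξ_i)) = 0 for all i ∈ {1,…,r}. -/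

import Mathlib

open MvPolynomial

/-- The linear form `v·X = v₁X₁ + ⋯ + vₘXₘ`. -/
noncomputable def linForm {m : ℕ} (v : Fin m → ℂ) : MvPolynomial (Fin m) ℂ :=
  ∑ i, C (v i) * X i

/-- The apolar product `⟨p,q⟩_d = Σ_{|α|=d} C(d,α) conj(p_α) q_α` of two homogeneous
polynomials of degree d, written in terms of the plain coefficients of p and q. -/
noncomputable def apolar {m : ℕ} (p q : MvPolynomial (Fin m) ℂ) : ℂ :=
  ∑ α ∈ p.support ∩ q.support,
    (starRingEnd ℂ) (MvPolynomial.coeff α p) * MvPolynomial.coeff α q /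
      (Nat.multinomial α.support α : ℂ)

/-- The monomial `X^γ`. -/
noncomputable def monomOf {m : ℕ} (γ : Fin m → ℕ) : MvPolynomial (Fin m) ℂ :=
  ∏ i, X i ^ γ i

/-- The Hankel matrix `H_T^{k,d-k}`: rows indexed by exponents α with |α| = k, columns
indexed by exponents β with |β| = d-k, entries `⟨T, X^{α+β}⟩_d`. -/
noncomputable def hankel (m d k : ℕ) (T : MvPolynomial (Fin m) ℂ) :
    Matrix (Finset.Nat.antidiagonalTuple m k) (Finset.Nat.antidiagonalTuple m (d - k)) ℂ :=
  fun α β => apolar T (monomOf ((α : Fin m → ℕ) + (β : Fin m → ℕ)))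

/-- The vector `ξ^{(k)} = (ξ^α)_{|α|=k}`. -/
noncomputable def powVec {m : ℕ} (k : ℕ) (ξ : Fin m → ℂ) :
    Finset.Nat.antidiagonalTuple m k → ℂ :=
  fun α => ∏ j, ξ j ^ (α : Fin m → ℕ) j

lemma prod_X_pow {m : ℕ} (γ : Fin m → ℕ) :
    (∏ i, (X i : MvPolynomial (Fin m) ℂ) ^ γ i)
      = monomial (Finsupp.equivFunOnFinite.symm γ) 1 := by
  rw [← prod_X_pow_eq_monomial]
  refine (Finset.prod_subset (Finset.subset_univ _) fun i _ hi => ?_).symm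
  simp only [Finsupp.mem_support_iff, ne_eq, not_not] at hi
  simp only [Finsupp.equivFunOnFinite_symm_apply_apply] at hi ⊢
  rw [hi, pow_zero]

lemma linForm_pow {m d : ℕ} (v : Fin m → ℂ) :
    linForm v ^ d = ∑ γ ∈ Finset.piAntidiag Finset.univ d,
      (Nat.multinomial Finset.univ γ : MvPolynomial (Fin m) ℂ) *
        monomial (Finsupp.equivFunOnFinite.symm γ) (∏ i, v i ^ γ i) := by
  rw [linForm, Finset.sum_pow_eq_sum_piAntidiag]
  refine Finset.sum_congr rfl fun γ hγ => ?_
  congr 1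
  calc ∏ i, (C (v i) * X i) ^ γ i
      = (∏ i, (C (v i) ^ γ i : MvPolynomial (Fin m) ℂ)) * ∏ i, (X i : MvPolynomial (Fin m) ℂ) ^ γ i := by
        rw [← Finset.prod_mul_distrib]; simp [mul_pow]
    _ = C (∏ i, v i ^ γ i) * monomial (Finsupp.equivFunOnFinite.symm γ) 1 := by
        rw [prod_X_pow]; congr 1; rw [map_prod]; simp
    _ = monomial (Finsupp.equivFunOnFinite.symm γ) (∏ i, v i ^ γ i) := by
        rw [C_mul_monomial, mul_one]

lemma coeff_linForm_pow {m d : ℕ} (v : Fin m → ℂ) (γ : Fin m → ℕ) (hγ : ∑ i, γ i = d) :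
    coeff (Finsupp.equivFunOnFinite.symm γ) (linForm v ^ d)
      = (Nat.multinomial Finset.univ γ : ℂ) * ∏ i, v i ^ γ i := by
  rw [linForm_pow]
  rw [MvPolynomial.coeff_sum]
  rw [Finset.sum_eq_single γ]
  · rw [← C_eq_coe_nat, coeff_C_mul, coeff_monomial]; simp
  · intro b hb hne
    have : Finsupp.equivFunOnFinite.symm b ≠ Finsupp.equivFunOnFinite.symm γ :=
      fun h => hne (Finsupp.equivFunOnFinite.symm.injective h)
    rw [← C_eq_coe_nat, coeff_C_mul, coeff_monomial, if_neg this, mul_zero]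
  · intro h
    exact absurd (by simp [Finset.mem_piAntidiag, hγ]) h

lemma multinomial_univ_eq {m : ℕ} (γ : Fin m → ℕ) :
    Nat.multinomial (Finsupp.equivFunOnFinite.symm γ).support
        ⇑(Finsupp.equivFunOnFinite.symm γ)
      = Nat.multinomial Finset.univ γ := by
  unfold Nat.multinomial
  have hs : ∑ i ∈ (Finsupp.equivFunOnFinite.symm γ).support,
      (Finsupp.equivFunOnFinite.symm γ) i = ∑ i, γ i := by
    refine Finset.sum_subset (Finset.subset_univ _) fun i _ hi => ?_
    simpa using hi
  have hp : ∏ i ∈ (Finsupp.equivFunOnFinite.symm γ).support,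
      Nat.factorial ((Finsupp.equivFunOnFinite.symm γ) i) = ∏ i, Nat.factorial (γ i) := by
    refine Finset.prod_subset (Finset.subset_univ _) fun i _ hi => ?_
    simp only [Finsupp.mem_support_iff, ne_eq, not_not] at hi
    simp only [Finsupp.equivFunOnFinite_symm_apply_apply] at hi ⊢
    rw [hi]; rfl
  rw [hs, hp]

lemma coeff_T {m d r : ℕ} (ω : Fin r → ℂ) (ξ : Fin r → Fin m → ℂ)
    (γ : Fin m → ℕ) (hγ : ∑ i, γ i = d) :
    coeff (Finsupp.equivFunOnFinite.symm γ) (∑ i, C (ω i) * linForm (ξ i) ^ d)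
      = (Nat.multinomial Finset.univ γ : ℂ) * ∑ i, ω i * ∏ j, ξ i j ^ γ j := by
  rw [MvPolynomial.coeff_sum, Finset.mul_sum]
  refine Finset.sum_congr rfl fun i _ => ?_
  rw [coeff_C_mul, coeff_linForm_pow _ γ hγ]; ring

lemma apolar_monomOf {m d r : ℕ} (ω : Fin r → ℂ) (ξ : Fin r → Fin m → ℂ)
    (γ : Fin m → ℕ) (hγ : ∑ i, γ i = d) :
    apolar (∑ i, C (ω i) * linForm (ξ i) ^ d) (monomOf γ)
      = ∑ i, (starRingEnd ℂ) (ω i) * ∏ j, ((starRingEnd ℂ) (ξ i j)) ^ γ j := by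
  classical
  set T : MvPolynomial (Fin m) ℂ := ∑ i, C (ω i) * linForm (ξ i) ^ d with hTdef
  set γ' : (Fin m) →₀ ℕ := Finsupp.equivFunOnFinite.symm γ with hγ'
  have hmono : monomOf γ = monomial γ' 1 := by rw [monomOf, prod_X_pow]
  have hsupp : (monomOf γ).support = {γ'} := by
    rw [hmono, support_monomial, if_neg one_ne_zero]
  have hcoeffT : coeff γ' T = (Nat.multinomial Finset.univ γ : ℂ) *
      ∑ i, ω i * ∏ j, ξ i j ^ γ j := coeff_T ω ξ γ hγ
  have hconj : (starRingEnd ℂ) (coeff γ' T)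
      = (Nat.multinomial Finset.univ γ : ℂ) *
        ∑ i, (starRingEnd ℂ) (ω i) * ∏ j, ((starRingEnd ℂ) (ξ i j)) ^ γ j := by
    rw [hcoeffT, map_mul, map_sum]
    simp [map_prod]
  have hmultne : (Nat.multinomial Finset.univ γ : ℂ) ≠ 0 := by
    exact_mod_cast (Nat.multinomial_pos _ _).ne'
  rw [apolar, hsupp]
  by_cases hmem : γ' ∈ T.support
  · rw [Finset.inter_singleton_of_mem hmem, Finset.sum_singleton]
    rw [hmono, coeff_monomial, if_pos rfl, mul_one, multinomial_univ_eq, hconj,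
      mul_div_assoc]
    rw [mul_comm, div_mul_cancel₀ _ hmultne]
  · rw [Finset.inter_singleton_of_notMem hmem, Finset.sum_empty]
    have h0 : coeff γ' T = 0 := by simpa using hmem
    have h1 : (Nat.multinomial Finset.univ γ : ℂ) *
        ∑ i, (starRingEnd ℂ) (ω i) * ∏ j, ((starRingEnd ℂ) (ξ i j)) ^ γ j = 0 := by
      rw [← hconj, h0, map_zero]
    exact ((mul_eq_zero.mp h1).resolve_left hmultne).symm

lemma hankel_entry {m d k r : ℕ} (hk : k ≤ d) (ω : Fin r → ℂ) (ξ : Fin r → Fin m → ℂ)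
    (α : Finset.Nat.antidiagonalTuple m k) (β : Finset.Nat.antidiagonalTuple m (d - k)) :
    hankel m d k (∑ i, C (ω i) * linForm (ξ i) ^ d) α β
      = ∑ i, (starRingEnd ℂ) (ω i) *
          powVec k (fun j => (starRingEnd ℂ) (ξ i j)) α *
          powVec (d - k) (fun j => (starRingEnd ℂ) (ξ i j)) β := by
  have hα : ∑ j, (α : Fin m → ℕ) j = k := Finset.Nat.mem_antidiagonalTuple.mp α.2
  have hβ : ∑ j, (β : Fin m → ℕ) j = d - k := Finset.Nat.mem_antidiagonalTuple.mp β.2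
  have hγ : ∑ j, ((α : Fin m → ℕ) + (β : Fin m → ℕ)) j = d := by
    simp only [Pi.add_apply, Finset.sum_add_distrib, hα, hβ]
    omega
  rw [hankel, apolar_monomOf ω ξ _ hγ]
  refine Finset.sum_congr rfl fun i _ => ?_
  rw [powVec, powVec, mul_assoc, ← Finset.prod_mul_distrib]
  congr 1
  refine Finset.prod_congr rfl fun j _ => ?_
  rw [Pi.add_apply, pow_add]

lemma eval_eq_sum_powVec {m k : ℕ} (p : MvPolynomial (Fin m) ℂ) (hp : p.IsHomogeneous k)
    (w : Fin m → ℂ) :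
    ∑ α : Finset.Nat.antidiagonalTuple m k,
        MvPolynomial.coeff (Finsupp.equivFunOnFinite.symm (α : Fin m → ℕ)) p * powVec k w α
      = MvPolynomial.eval w p := by
  classical
  simp only [powVec]
  set f : (Fin m →₀ ℕ) → ℂ := fun b => MvPolynomial.coeff b p * ∏ j, w j ^ b j with hf
  set e : (Fin m → ℕ) ↪ (Fin m →₀ ℕ) :=
    ⟨Finsupp.equivFunOnFinite.symm, Finsupp.equivFunOnFinite.symm.injective⟩ with he
  have step1 : ∑ α : Finset.Nat.antidiagonalTuple m k,
      MvPolynomial.coeff (Finsupp.equivFunOnFinite.symm (α : Fin m → ℕ)) p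
        * ∏ j, w j ^ (α : Fin m → ℕ) j
      = ∑ a ∈ Finset.Nat.antidiagonalTuple m k, f (e a) :=
    Finset.sum_coe_sort (Finset.Nat.antidiagonalTuple m k) (fun a => f (e a))
  have step2 : ∑ a ∈ Finset.Nat.antidiagonalTuple m k, f (e a)
      = ∑ b ∈ (Finset.Nat.antidiagonalTuple m k).map e, f b :=
    (Finset.sum_map _ e f).symm
  rw [step1, step2, MvPolynomial.eval_eq]
  have hsub : p.support ⊆ (Finset.Nat.antidiagonalTuple m k).map e := by
    intro b hb
    rw [Finset.mem_map]
    refine ⟨⇑b, ?_, by simp [he]⟩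
    rw [Finset.Nat.mem_antidiagonalTuple]
    have h1 := hp (MvPolynomial.mem_support_iff.mp hb)
    have h2 : b.degree = ∑ j : Fin m, b j := by
      rw [Finsupp.degree]
      refine Finset.sum_subset (Finset.subset_univ _) ?_
      intro j _ hj
      exact Finsupp.notMem_support_iff.mp hj
    rw [← h2, Finsupp.degree_eq_weight_one]
    exact h1
  have h0 : ∀ b ∈ (Finset.Nat.antidiagonalTuple m k).map e, b ∉ p.support → f b = 0 := by
    intro b _ hb
    rw [MvPolynomial.mem_support_iff, not_not] at hb
    simp [hf, hb]
  rw [← Finset.sum_subset hsub h0]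
  refine Finset.sum_congr rfl fun b hb => ?_
  rw [hf]
  have hps : ∏ j ∈ b.support, w j ^ b j = ∏ j : Fin m, w j ^ b j := by
    refine Finset.prod_subset (Finset.subset_univ _) ?_
    intro j _ hj
    simp only [Finsupp.mem_support_iff, ne_eq, not_not] at hj
    rw [hj, pow_zero]
  rw [hps]

/-- if T = Σ ω_i (ξ_i·X)^d with ω_i ≠ 0 and rank H_T^{k,d-k} = r, then the
column space of H_T^{k,d-k} is the span of conj(ξ_1)^{(k)},…,conj(ξ_r)^{(k)}, and a
homogeneous p ∈ ℂ[X]_k has coefficient vector in the left kernel of H_T^{k,d-k}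
(equivalently, orthogonal to the column space under the bilinear pairing) iff
p(conj ξ_i) = 0 for all i. -/
theorem statement_14 (m d k r : ℕ) (hk : k ≤ d)
    (ω : Fin r → ℂ) (hω : ∀ i, ω i ≠ 0) (ξ : Fin r → Fin m → ℂ)
    (T : MvPolynomial (Fin m) ℂ) (hT : T = ∑ i, C (ω i) * linForm (ξ i) ^ d)
    (hrank : (hankel m d k T).rank = r) :
    LinearMap.range (hankel m d k T).mulVecLin
      = Submodule.span ℂ (Set.range fun i => powVec k fun j => (starRingEnd ℂ) (ξ i j)) ∧
    ∀ p : MvPolynomial (Fin m) ℂ, p.IsHomogeneous k →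
      ((Matrix.vecMul
          (fun α : Finset.Nat.antidiagonalTuple m k => MvPolynomial.coeff (Finsupp.equivFunOnFinite.symm (α : Fin m → ℕ)) p)
          (hankel m d k T) = 0) ↔
        ∀ i, MvPolynomial.eval (fun j => (starRingEnd ℂ) (ξ i j)) p = 0) := by
  classical
  set u : Fin r → (Finset.Nat.antidiagonalTuple m k → ℂ) :=
    fun i => powVec k fun j => (starRingEnd ℂ) (ξ i j) with hu
  set v : Fin r → (Finset.Nat.antidiagonalTuple m (d - k) → ℂ) :=
    fun i => powVec (d - k) fun j => (starRingEnd ℂ) (ξ i j) with hv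
  have hH : ∀ α β, hankel m d k T α β = ∑ i, (starRingEnd ℂ) (ω i) * u i α * v i β := by
    intro α β
    rw [hT]
    exact hankel_entry hk ω ξ α β
  -- part 1
  have hle : LinearMap.range (hankel m d k T).mulVecLin ≤ Submodule.span ℂ (Set.range u) := by
    rintro y ⟨x, rfl⟩
    have hy : (hankel m d k T).mulVecLin x
        = ∑ i, ((starRingEnd ℂ) (ω i) * ∑ β, v i β * x β) • u i := by
      funext α
      simp only [Matrix.mulVecLin_apply, Matrix.mulVec, dotProduct]
      simp only [hH, Finset.sum_mul]
      rw [Finset.sum_comm]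
      simp only [Finset.sum_apply, Pi.smul_apply, smul_eq_mul]
      refine Finset.sum_congr rfl fun i _ => ?_
      rw [Finset.mul_sum, Finset.sum_mul]
      refine Finset.sum_congr rfl fun β _ => by ring
    rw [hy]
    exact Submodule.sum_mem _ fun i _ =>
      Submodule.smul_mem _ _ (Submodule.subset_span ⟨i, rfl⟩)
  have hfr : Module.finrank ℂ (Submodule.span ℂ (Set.range u)) ≤ r := by
    simpa [Set.finrank] using finrank_range_le_card (R := ℂ) u
  have part1 : LinearMap.range (hankel m d k T).mulVecLin = Submodule.span ℂ (Set.range u) := by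
    refine Submodule.eq_of_le_of_finrank_le hle ?_
    rw [show Module.finrank ℂ (LinearMap.range (hankel m d k T).mulVecLin)
      = (hankel m d k T).rank from rfl, hrank]
    exact hfr
  refine ⟨part1, fun p hp => ?_⟩
  set c : Finset.Nat.antidiagonalTuple m k → ℂ :=
    fun α => MvPolynomial.coeff (Finsupp.equivFunOnFinite.symm (α : Fin m → ℕ)) p with hc
  have hdot : ∀ w : Fin m → ℂ, p.IsHomogeneous k →
      dotProduct c (powVec k w) = MvPolynomial.eval w p := by
    intro w hp'
    rw [dotProduct]
    exact eval_eq_sum_powVec p hp' w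
  constructor
  · intro h i
    have hui : u i ∈ LinearMap.range (hankel m d k T).mulVecLin := by
      rw [part1]; exact Submodule.subset_span ⟨i, rfl⟩
    obtain ⟨x, hx⟩ := hui
    have : MvPolynomial.eval (fun j => (starRingEnd ℂ) (ξ i j)) p
        = dotProduct c ((hankel m d k T).mulVec x) := by
      rw [show (hankel m d k T).mulVec x = u i from hx]
      exact (hdot _ hp).symm
    rw [this, Matrix.dotProduct_mulVec, h, zero_dotProduct]
  · intro h
    funext β
    have : Matrix.vecMul c (hankel m d k T) β
        = ∑ i, (starRingEnd ℂ) (ω i) * (dotProduct c (u i)) * v i β := by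
      simp only [Matrix.vecMul, dotProduct]
      simp only [hH, Finset.mul_sum]
      rw [Finset.sum_comm]
      refine Finset.sum_congr rfl fun i _ => ?_
      rw [Finset.sum_mul]
      exact Finset.sum_congr rfl fun α _ => by ring
    rw [this]
    simp only [hu]
    rw [Finset.sum_eq_zero fun i _ => ?_]
    · rfl
    · rw [hdot _ hp, h i, mul_zero, zero_mul]
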